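/- Let n = 2m. The function f₀ = ⊕_{i=0}^{m-1} x_i x_{m+i} is the only bent short-cycle monomial rotation symmetric Boolean function in n variables. -/

import Mathlib

/-!
If fewer than `2m` translates of `S` are distinct, `S` is invariant under a nonzero translation
`c`, which may be taken with `c ≤ m`. For `S = {0, m}` the MRS function is `f₀`, which is bent
because its Walsh transform factors into `m` two-variable sums of absolute value `2`. Otherwise
every translate of `S` meets `B = {0, …, m - 2}`: for `c < m` because a `c`-periodic set contains
an element below `c`, and for `c = m` because `S` is then a union of at least two pairs
`{t, t + m}`. Hence the MRS function vanishes on the `(m + 1)`-dimensional subspace `x|_B = 0`.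
A bent function in `2m` variables cannot vanish there: summing its Walsh transform over the
`2^|B|` vectors supported on `B` gives `2^(2m)`, while the sum is at most `2^(|B| + m)` in
absolute value. Since `f₀` is bent, the right-hand side fails for such `S` as well.
-/

open Finset

lemma Nat.eq_zero_or_eq_of_mod_eq_zero_of_lt_two_mul {m a : ℕ} (ha : a < 2 * m) (h : a % m = 0) :
    a = 0 ∨ a = m := by
  obtain ⟨q, rfl⟩ := Nat.dvd_of_mod_eq_zero h
  have : q < 2 := Nat.lt_of_mul_lt_mul_left (by linarith : m * q < m * 2)
  interval_cases q <;> simp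

namespace Finset

variable {G : Type*} [DecidableEq G]

lemma image_add_neg_eq_self [AddGroup G] {S : Finset G} {c : G} (hc : S.image (· + c) = S) :
    S.image (· + -c) = S := by
  conv_lhs => rw [← hc, image_image]
  simp only [Function.comp_def, add_neg_cancel_right, image_id']

lemma image_add_image_add_comm [AddCommSemigroup G] (S : Finset G) (c j : G) :
    (S.image (· + j)).image (· + c) = (S.image (· + c)).image (· + j) := by
  simp only [image_image, Function.comp_def, add_right_comm]

end Finset

lemma Fin.exists_mem_val_eq_mod {n : ℕ} {T : Finset (Fin n)} {c : Fin n}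
    (hc : T.image (· + c) = T) {t : Fin n} (ht : t ∈ T) : ∃ u ∈ T, u.val = t.val % c.val := by
  induction h : t.val using Nat.strong_induction_on generalizing t with
  | _ k ih =>
    subst h
    rcases Nat.eq_zero_or_pos c.val with hc0 | hc0
    · exact ⟨t, ht, by rw [hc0, Nat.mod_zero]⟩
    by_cases htc : t.val < c.val
    · exact ⟨t, ht, (Nat.mod_eq_of_lt htc).symm⟩
    obtain ⟨u, hu, rfl⟩ := mem_image.mp (by rwa [hc] : t ∈ T.image (· + c))
    have hval : (u + c).val = u.val + c.val := by
      rw [Fin.val_add]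
      apply Nat.mod_eq_of_lt
      by_contra hge
      have := u.isLt
      rw [Fin.val_add, Nat.mod_eq_sub_mod (not_lt.mp hge), Nat.mod_eq_of_lt (by omega)] at htc
      omega
    obtain ⟨v, hv, hvu⟩ := ih u.val (by omega) hu rfl
    exact ⟨v, hv, by rw [hvu, hval, Nat.add_mod_right]⟩

lemma Fin.sum_univ_two_mul {M : Type*} [AddCommMonoid M] (m : ℕ) (F : Fin (2 * m) → M) :
    ∑ t, F t = ∑ i : Fin m, (F ⟨i, by omega⟩ + F ⟨m + i, by omega⟩) := by
  rw [← Fin.sum_congr' F (two_mul m).symm, Fin.sum_univ_add, ← sum_add_distrib]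
  rfl

def Fin.halvesEquiv (α : Type*) (m : ℕ) : (Fin (2 * m) → α) ≃ (Fin m → α × α) :=
  ((finCongr (two_mul m)).arrowCongr (Equiv.refl α)).trans
    ((Fin.appendEquiv m m).symm.trans (Equiv.arrowProdEquivProdArrow _ _ _).symm)

namespace BooleanFunction

def sign (a : ZMod 2) : ℤ := (-1) ^ a.val

@[simp] lemma sign_zero : sign 0 = 1 := rfl

lemma sign_add (a b : ZMod 2) : sign (a + b) = sign a * sign b := by
  revert a b; decide

lemma sign_sum {α : Type*} (s : Finset α) (f : α → ZMod 2) :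
    sign (∑ i ∈ s, f i) = ∏ i ∈ s, sign (f i) := by
  classical
  induction s using Finset.induction_on with
  | empty => rfl
  | insert a s ha ih => rw [sum_insert ha, prod_insert ha, sign_add, ih]

lemma sum_sign_mul (a : ZMod 2) : ∑ b, sign (b * a) = if a = 0 then 2 else 0 := by
  revert a; decide

section Walsh

variable {ι : Type*} [Fintype ι] [DecidableEq ι]

def walsh (f : (ι → ZMod 2) → ZMod 2) (w : ι → ZMod 2) : ℤ :=
  ∑ x, sign (f x + ∑ i, w i * x i)

theorem card_le_of_abs_walsh_eq_of_eq_zero (f : (ι → ZMod 2) → ZMod 2) (k : ℕ)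
    (hbent : ∀ w, |walsh f w| = 2 ^ k) (B : Finset ι)
    (hf : ∀ x, (∀ i ∈ B, x i = 0) → f x = 0) : Fintype.card ι ≤ B.card + k := by
  set W := Fintype.piFinset fun i => if i ∈ B then (univ : Finset (ZMod 2)) else {0}
  set c : ι → ZMod 2 → ℤ := fun i a => if i ∈ B then (if a = 0 then 2 else 0) else 1
  have hW : ∀ x : ι → ZMod 2, ∑ w ∈ W, sign (∑ i, w i * x i) = ∏ i, c i (x i) := by
    intro x
    simp only [sign_sum, W]
    rw [← prod_univ_sum _ fun i a => sign (a * x i)]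
    refine prod_congr rfl fun i _ => ?_
    by_cases hi : i ∈ B <;> simp [hi, c, sum_sign_mul]
  have hc : ∀ x : ι → ZMod 2, sign (f x) * ∏ i, c i (x i) = ∏ i, c i (x i) := by
    intro x
    by_cases hx : ∀ i ∈ B, x i = 0
    · rw [hf x hx, sign_zero, one_mul]
    · push Not at hx
      obtain ⟨i, hi, hxi⟩ := hx
      rw [prod_eq_zero (mem_univ i) (by simp [c, hi, hxi]), mul_zero]
  have hsum : ∑ w ∈ W, walsh f w = 2 ^ Fintype.card ι := by
    calc ∑ w ∈ W, walsh f w = ∑ x, sign (f x) * ∑ w ∈ W, sign (∑ i, w i * x i) := by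
          simp only [walsh, sign_add, mul_sum]; exact sum_comm
      _ = ∑ x : ι → ZMod 2, ∏ i, c i (x i) := by simp only [hW, hc]
      _ = ∏ i, ∑ a, c i a := (Fintype.prod_sum c).symm
      _ = 2 ^ Fintype.card ι := by
          rw [prod_congr rfl fun i _ => (show ∑ a, c i a = 2 by
            by_cases hi : i ∈ B <;> simp [c, hi]), prod_const, card_univ]
  have hcardW : W.card = 2 ^ B.card := by
    simp only [W, Fintype.card_piFinset, apply_ite card, card_univ, ZMod.card, card_singleton]
    rw [prod_ite_mem, univ_inter, prod_const]
  have hle : (2 : ℤ) ^ Fintype.card ι ≤ 2 ^ (B.card + k) := by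
    calc (2 : ℤ) ^ Fintype.card ι = |∑ w ∈ W, walsh f w| := by rw [hsum, abs_pow, abs_two]
      _ ≤ ∑ w ∈ W, |walsh f w| := abs_sum_le_sum_abs _ _
      _ = 2 ^ (B.card + k) := by simp [hbent, hcardW, pow_add]
  exact (pow_le_pow_iff_right₀ (by norm_num)).mp hle

end Walsh

def innerProductFun (m : ℕ) (x : Fin (2 * m) → ZMod 2) : ZMod 2 :=
  ∑ i : Fin m, x ⟨i, by omega⟩ * x ⟨m + i, by omega⟩

lemma abs_sum_sign_mul_add (a b : ZMod 2) :
    |∑ p : ZMod 2 × ZMod 2, sign (p.1 * p.2 + (a * p.1 + b * p.2))| = 2 := by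
  revert a b; decide

theorem abs_walsh_innerProductFun (m : ℕ) (w : Fin (2 * m) → ZMod 2) :
    |walsh (innerProductFun m) w| = 2 ^ m := by
  have key : walsh (innerProductFun m) w = ∏ i : Fin m, ∑ p : ZMod 2 × ZMod 2,
      sign (p.1 * p.2 + (w ⟨i, by omega⟩ * p.1 + w ⟨m + i, by omega⟩ * p.2)) := by
    rw [Fintype.prod_sum]
    refine Fintype.sum_equiv (Fin.halvesEquiv _ m) _ _ fun x => ?_
    rw [innerProductFun, Fin.sum_univ_two_mul, ← sum_add_distrib, sign_sum]
    rfl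
  simp [key, abs_prod, abs_sum_sign_mul_add]

section Translates

variable {G : Type*} [Fintype G] [DecidableEq G]

def translates [Add G] (S : Finset G) : Finset (Finset G) :=
  univ.image fun j => S.image (· + j)

def mrs [Add G] (S : Finset G) (x : G → ZMod 2) : ZMod 2 :=
  ∑ T ∈ translates S, ∏ t ∈ T, x t

lemma mrs_eq_zero_of_forall_inter_nonempty [Add G] {S B : Finset G}
    (hB : ∀ T ∈ translates S, ∃ b ∈ T, b ∈ B) {x : G → ZMod 2} (hx : ∀ i ∈ B, x i = 0) :
    mrs S x = 0 :=
  sum_eq_zero fun T hT =>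
    let ⟨b, hbT, hbB⟩ := hB T hT
    prod_eq_zero hbT (hx b hbB)

lemma exists_ne_zero_image_add_eq_of_card_translates_lt [AddGroup G] {S : Finset G}
    (hS : (translates S).card < Fintype.card G) : ∃ c ≠ 0, S.image (· + c) = S := by
  obtain ⟨j₁, j₂, hj, hne⟩ : ∃ j₁ j₂, S.image (· + j₁) = S.image (· + j₂) ∧ j₁ ≠ j₂ := by
    by_contra! hinj
    exact hS.ne (card_image_of_injective _ fun j₁ j₂ h => hinj j₁ j₂ h)
  refine ⟨j₁ - j₂, sub_ne_zero.mpr hne, ?_⟩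
  calc S.image (· + (j₁ - j₂)) = (S.image (· + j₁)).image (· + -j₂) := by
        simp only [image_image, Function.comp_def, sub_eq_add_neg, add_assoc]
    _ = S := by
        rw [hj, image_image]
        simp only [Function.comp_def, add_neg_cancel_right, image_id']

end Translates

section CyclicGroup

variable {m : ℕ} [NeZero m]

def half (m : ℕ) [NeZero m] : Fin (2 * m) := ⟨m, by have := NeZero.pos m; omega⟩

lemma exists_ne_zero_val_le_image_add_eq {S : Finset (Fin (2 * m))}
    (hS : (translates S).card < 2 * m) :
    ∃ c : Fin (2 * m), c ≠ 0 ∧ c.val ≤ m ∧ S.image (· + c) = S := by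
  obtain ⟨c, hc0, hc⟩ :=
    exists_ne_zero_image_add_eq_of_card_translates_lt (by rwa [Fintype.card_fin])
  by_cases hcm : c.val ≤ m
  · exact ⟨c, hc0, hcm, hc⟩
  · refine ⟨-c, neg_ne_zero.mpr hc0, ?_, image_add_neg_eq_self hc⟩
    rw [Fin.val_neg', Nat.mod_eq_of_lt (by omega)]
    omega

theorem exists_mem_image_add_val_lt {S : Finset (Fin (2 * m))} (h0 : 0 ∈ S)
    (hS : S ≠ {0, half m}) {c : Fin (2 * m)} (hc0 : c ≠ 0) (hcm : c.val ≤ m)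
    (hc : S.image (· + c) = S) (j : Fin (2 * m)) : ∃ t ∈ S.image (· + j), t.val < m - 1 := by
  have hT : (S.image (· + j)).image (· + c) = S.image (· + j) := by
    rw [image_add_image_add_comm, hc]
  have hj : j ∈ S.image (· + j) := mem_image.mpr ⟨0, h0, zero_add j⟩
  have hcpos : 0 < c.val := Nat.pos_of_ne_zero (Fin.val_ne_iff.mpr hc0)
  obtain ⟨u, hu, hu'⟩ := Fin.exists_mem_val_eq_mod hT hj
  rcases hcm.lt_or_eq with hlt | heq
  · exact ⟨u, hu, by have := Nat.mod_lt j.val hcpos; omega⟩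
  -- `c = half m`, so the translate is a union of pairs `{t, t + m}`, and it contains two of them.
  have hcS : c ∈ S := hc ▸ mem_image.mpr ⟨0, h0, zero_add c⟩
  obtain ⟨a, ha, ha0, hac⟩ : ∃ a ∈ S, a ≠ 0 ∧ a ≠ c := by
    by_contra! h
    refine hS (Subset.antisymm (fun a ha => ?_) (insert_subset h0 (singleton_subset_iff.mpr ?_)))
    · by_cases ha0 : a = 0
      · simp [ha0]
      · simp [h a ha ha0, half, Fin.ext_iff, heq]
    · convert hcS; exact Fin.ext heq.symm
  obtain ⟨v, hv, hv'⟩ := Fin.exists_mem_val_eq_mod hT (mem_image.mpr ⟨a, ha, rfl⟩)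
  have hne : j.val % m ≠ (a + j).val % m := by
    rw [Fin.val_add, Nat.mod_mod_of_dvd _ (dvd_mul_left m 2)]
    intro h
    have ham : a.val % m = 0 := Nat.ModEq.add_right_cancel' j.val
      (show (a.val + j.val) % m = (0 + j.val) % m by simpa using h.symm)
    rcases Nat.eq_zero_or_eq_of_mod_eq_zero_of_lt_two_mul a.isLt ham with h | h
    · exact ha0 (Fin.ext h)
    · exact hac (Fin.ext (h.trans heq.symm))
  rw [heq] at hu' hv'
  have := Nat.mod_lt j.val (NeZero.pos m)
  have := Nat.mod_lt (a + j).val (NeZero.pos m)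
  by_cases hlt : u.val < m - 1
  · exact ⟨u, hu, hlt⟩
  · exact ⟨v, hv, by omega⟩

theorem not_forall_abs_walsh_mrs_eq {S : Finset (Fin (2 * m))} (h0 : 0 ∈ S)
    (hS : S ≠ {0, half m}) (hshort : (translates S).card < 2 * m) :
    ¬ ∀ w, |walsh (mrs S) w| = 2 ^ m := by
  intro hbent
  obtain ⟨c, hc0, hcm, hc⟩ := exists_ne_zero_val_le_image_add_eq hshort
  have hB : ∀ T ∈ translates S, ∃ b ∈ T, b ∈ Iio (⟨m - 1, by omega⟩ : Fin (2 * m)) := by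
    intro T hT
    obtain ⟨j, -, rfl⟩ := mem_image.mp hT
    obtain ⟨t, ht, hlt⟩ := exists_mem_image_add_val_lt h0 hS hc0 hcm hc j
    exact ⟨t, ht, by simpa [Fin.lt_def] using hlt⟩
  have hcard := card_le_of_abs_walsh_eq_of_eq_zero _ m hbent _
    fun x => mrs_eq_zero_of_forall_inter_nonempty hB (x := x)
  simp only [Fintype.card_fin, Fin.card_Iio] at hcard
  have := NeZero.pos m
  omega

lemma val_half_add (j : Fin (2 * m)) :
    (half m + j).val = if j.val < m then m + j.val else j.val - m := by
  change (m + j.val) % (2 * m) = _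
  split_ifs with hj
  · exact Nat.mod_eq_of_lt (by omega)
  · rw [Nat.mod_eq_sub_mod (by omega), Nat.mod_eq_of_lt (by omega)]
    omega

lemma translates_zero_half :
    translates ({0, half m} : Finset (Fin (2 * m))) =
      univ.image fun i : Fin m => {⟨i, by omega⟩, ⟨m + i, by omega⟩} := by
  ext T
  simp only [translates, mem_image, mem_univ, true_and, image_insert, image_singleton, zero_add]
  constructor
  · rintro ⟨j, rfl⟩
    by_cases hj : j.val < m
    · refine ⟨⟨j, hj⟩, ?_⟩
      congr 2
      exact Fin.ext (by rw [val_half_add, if_pos hj])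
    · refine ⟨⟨j - m, by omega⟩, ?_⟩
      rw [pair_comm]
      congr 2
      · dsimp only; omega
      · exact Fin.ext (by rw [val_half_add, if_neg hj])
  · rintro ⟨i, rfl⟩
    refine ⟨⟨i, by omega⟩, ?_⟩
    congr 2
    exact Fin.ext (by rw [val_half_add, if_pos i.isLt])

lemma mrs_zero_half : mrs ({0, half m} : Finset (Fin (2 * m))) = innerProductFun m := by
  funext x
  rw [mrs, translates_zero_half, sum_image]
  · exact sum_congr rfl fun i _ => prod_pair (by simp [Fin.ext_iff, NeZero.ne m])
  · intro i _ i' _ h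
    have := mem_insert_self (⟨i, by omega⟩ : Fin (2 * m)) {⟨m + i, by omega⟩}
    simp only [h, mem_insert, mem_singleton, Fin.ext_iff] at this
    omega

end CyclicGroup

end BooleanFunction

open BooleanFunction

/-- In `n = 2m` variables, `f₀ = ⊕_{i=0}^{m-1} x_i x_{m+i}` is the only
bent short-cycle MRS Boolean function: a short-cycle MRS function (sum of the fewer
than `n` distinct cyclic shifts of a monomial containing `x₀`) is bent iff it equals `f₀`. -/
theorem stmt13 (m : ℕ) (hm : 0 < m) (S : Finset (Fin (2*m)))
    (hS0 : (⟨0, by omega⟩ : Fin (2*m)) ∈ S)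
    (hshort : (Finset.univ.image (fun j : Fin (2*m) => S.image (· + j))).card < 2*m) :
    (∀ w : Fin (2*m) → ZMod 2,
      (∑ x : Fin (2*m) → ZMod 2,
        (-1 : ℤ) ^ (((∑ T ∈ Finset.univ.image (fun j : Fin (2*m) => S.image (· + j)),
            ∏ t ∈ T, x t) + ∑ i, w i * x i).val)) = 2 ^ m ∨
      (∑ x : Fin (2*m) → ZMod 2,
        (-1 : ℤ) ^ (((∑ T ∈ Finset.univ.image (fun j : Fin (2*m) => S.image (· + j)),
            ∏ t ∈ T, x t) + ∑ i, w i * x i).val)) = -(2 ^ m))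
    ↔ (∀ x : Fin (2*m) → ZMod 2,
        (∑ T ∈ Finset.univ.image (fun j : Fin (2*m) => S.image (· + j)), ∏ t ∈ T, x t)
          = ∑ i : Fin m, x ⟨i.val, by have := i.isLt; omega⟩ *
              x ⟨m + i.val, by have := i.isLt; omega⟩) := by
  have : NeZero m := ⟨hm.ne'⟩
  have h0 : (0 : Fin (2 * m)) ∈ S := hS0
  change (∀ w, walsh (mrs S) w = 2 ^ m ∨ walsh (mrs S) w = -(2 ^ m)) ↔
    ∀ x, mrs S x = innerProductFun m x
  simp only [← abs_eq (by positivity : (0 : ℤ) ≤ 2 ^ m)]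
  by_cases hS : S = {0, half m}
  · subst hS
    simp [mrs_zero_half, abs_walsh_innerProductFun]
  · have hbent := not_forall_abs_walsh_mrs_eq h0 hS hshort
    refine iff_of_false hbent fun h => hbent ?_
    rw [show mrs S = innerProductFun m from funext h]
    exact abs_walsh_innerProductFun m
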